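/- arXiv:2510.09902 — 4 statements merged into one kernel-verified Lean document; each statement's English description precedes it below -/
import Mathlib

section
/- Let X be a topological space equipped with a measure, let a group G act on X, let 𝔽 be an abelian group, and let H ⊆ G be a subgroup of finite index. Let 𝓕 be a class of functions X → 𝔽 that is an abelian group under pointwise addition, is stable under the G-action (g·f)(x) = f(g⁻¹x), and such that every nonzero element of 𝓕 has a vanishing set that is closed and of measure zero. Suppose f₁, …, f_r : X → 𝔽 are G-invariant functions that are generically SW-distinguishing for G, and f*₁, …, f*_s : X → 𝔽 Galois-distinguish H from G. Then the combined family f₁, …, f_r, f*₁, …, f*_s is generically SW-distinguishing for H. -/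
open MeasureTheory

/-- The action of a group element `g` on functions `X → 𝔽`, `(g · f)(x) := f (g⁻¹ • x)`. -/
def actOn {G X 𝔽 : Type*} [Group G] [MulAction G X] (g : G) (f : X → 𝔽) : X → 𝔽 :=
  fun x => f (g⁻¹ • x)

/-- A family of functions `f : ι → X → 𝔽` is *generically SW-distinguishing* for a
subgroup `K ≤ G` if there is a closed, measure-zero, `K`-stable "bad set" `B ⊆ X` such
that any two points outside `B` on which all the `f j` agree lie in the same `K`-orbit. -/
def GenSWDist {G X 𝔽 : Type*} [Group G] [MulAction G X] [TopologicalSpace X]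
    [MeasurableSpace X] (μ : Measure X) (K : Subgroup G) {ι : Type*}
    (f : ι → X → 𝔽) : Prop :=
  ∃ B : Set X, IsClosed B ∧ μ B = 0 ∧ (∀ g ∈ K, ∀ x ∈ B, g • x ∈ B) ∧
    ∀ x₁ ∉ B, ∀ x₂ ∉ B, (∀ j, f j x₁ = f j x₂) → ∃ g ∈ K, g • x₁ = x₂

/-- The functions `f : ι → X → 𝔽` *Galois-distinguish* `H` from `G` (relative to the
class `𝓕`) if each `f j` belongs to `𝓕`, is `H`-invariant, and the only elements of `G`
fixing all the `f j` are those of `H`. -/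
def GaloisDist {G X 𝔽 : Type*} [Group G] [MulAction G X]
    (𝓕 : Set (X → 𝔽)) (H : Subgroup G) {ι : Type*} (f : ι → X → 𝔽) : Prop :=
  (∀ j, f j ∈ 𝓕) ∧ (∀ j, ∀ h ∈ H, actOn h (f j) = f j) ∧
    ∀ g : G, (∀ j, actOn g (f j) = f j) → g ∈ H

/-- **Theorem 3.1 of Blum–Smith et al.** If `f₁, …, f_r` are `G`-invariant and generically
SW-distinguishing for `G`, and `f*₁, …, f*_s` Galois-distinguish the finite-index subgroup
`H` from `G` (relative to a class `𝓕` of functions forming an abelian group under pointwise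
addition, `G`-stable, and whose nonzero members have closed measure-zero vanishing sets),
then the combined family is generically SW-distinguishing for `H`. -/
theorem genSWDist_of_galoisDist
    {G X 𝔽 : Type*} [Group G] [MulAction G X] [TopologicalSpace X]
    [MeasurableSpace X] [AddCommGroup 𝔽] (μ : Measure X)
    (H : Subgroup G) [H.FiniteIndex]
    (𝓕 : AddSubgroup (X → 𝔽))
    (hGstable : ∀ g : G, ∀ f ∈ 𝓕, actOn g f ∈ 𝓕)
    (hvanish : ∀ f ∈ 𝓕, f ≠ (0 : X → 𝔽) →
      IsClosed {x : X | f x = 0} ∧ μ {x : X | f x = 0} = 0)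
    {r s : ℕ} (f : Fin r → X → 𝔽) (fstar : Fin s → X → 𝔽)
    (hfinv : ∀ j, ∀ g : G, actOn g (f j) = f j)
    (hfSW : GenSWDist μ (⊤ : Subgroup G) f)
    (hgal : GaloisDist (𝓕 : Set (X → 𝔽)) H fstar) :
    GenSWDist μ H (Sum.elim f fstar) := by
  obtain ⟨B₀, hB₀closed, hB₀null, hB₀stable, hB₀dist⟩ := hfSW
  obtain ⟨hmem, hHinv, hgalois⟩ := hgal
  -- pointwise H-invariance of fstar
  have hinv' : ∀ j, ∀ h ∈ H, ∀ x : X, fstar j (h • x) = fstar j x := by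
    intro j h hh x
    have := congrFun (hHinv j h hh) (h • x)
    simp only [actOn, inv_smul_smul] at this
    exact this.symm
  set Z : G → Set X := fun g => ⋂ j, {x | fstar j (g⁻¹ • x) = fstar j x} with hZdef
  have hset : ∀ (g : G) (j : Fin s), {x | fstar j (g⁻¹ • x) = fstar j x}
      = {x | (actOn g (fstar j) - fstar j) x = 0} := by
    intro g j; ext x; simp [actOn, sub_eq_zero]
  have hZclosed : ∀ g, IsClosed (Z g) := by
    intro g
    apply isClosed_iInter
    intro j
    rw [hset g j]
    by_cases hd : actOn g (fstar j) - fstar j = (0 : X → 𝔽)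
    · have : {x : X | (actOn g (fstar j) - fstar j) x = 0} = Set.univ := by
        ext x
        simp only [Set.mem_setOf_eq, Set.mem_univ, iff_true]
        exact congrFun hd x
      rw [this]; exact isClosed_univ
    · exact (hvanish _ (sub_mem (hGstable g _ (hmem j)) (hmem j)) hd).1
  have hZnull : ∀ g, g ∉ H → μ (Z g) = 0 := by
    intro g hg
    have hne : ¬ ∀ j, actOn g (fstar j) = fstar j := fun h => hg (hgalois g h)
    push_neg at hne
    obtain ⟨j, hj⟩ := hne
    have hd : actOn g (fstar j) - fstar j ≠ (0 : X → 𝔽) := sub_ne_zero_of_ne hj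
    have hsub : Z g ⊆ {x | (actOn g (fstar j) - fstar j) x = 0} := by
      intro x hx
      have := Set.mem_iInter.mp hx j
      rw [hset g j] at this
      exact this
    exact measure_mono_null hsub
      (hvanish _ (sub_mem (hGstable g _ (hmem j)) (hmem j)) hd).2
  -- Z depends only on the left coset
  have hZcoset : ∀ g g' : G, g⁻¹ * g' ∈ H → Z g = Z g' := by
    intro g g' hgg
    have key : ∀ (j : Fin s) (x : X), fstar j (g⁻¹ • x) = fstar j (g'⁻¹ • x) := by
      intro j x
      have := hinv' j (g⁻¹ * g') hgg (g'⁻¹ • x)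
      rw [smul_smul] at this
      rw [show g⁻¹ * g' * g'⁻¹ = g⁻¹ by group] at this
      exact this
    ext x
    simp only [hZdef, Set.mem_iInter, Set.mem_setOf_eq]
    constructor
    · intro hx j; rw [← key j x]; exact hx j
    · intro hx j; rw [key j x]; exact hx j
  -- the bad set coming from the nontrivial cosets
  classical
  set S : Set (G ⧸ H) := {c | Quotient.out c ∉ H} with hSdef
  set T : Set X := ⋃ c ∈ S, Z (Quotient.out c) with hTdef
  have hSfin : S.Finite := Set.toFinite S
  have hTclosed : IsClosed T := hSfin.isClosed_biUnion fun c _ => hZclosed _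
  have hTnull : μ T = 0 := by
    rw [hTdef, measure_biUnion_null_iff hSfin.countable]
    exact fun c hc => hZnull _ hc
  -- membership characterization of T
  have hZT : ∀ g : G, g ∉ H → Z g ⊆ T := by
    intro g hg x hx
    set c : G ⧸ H := QuotientGroup.mk g with hc
    have hout : (Quotient.out c)⁻¹ * g ∈ H :=
      QuotientGroup.eq.mp (QuotientGroup.out_eq' c)
    have houtH : Quotient.out c ∉ H := by
      intro hmemH
      exact hg (by simpa using H.mul_mem hmemH hout)
    have : Z (Quotient.out c) = Z g := hZcoset _ _ hout
    exact Set.mem_biUnion houtH (this ▸ hx)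
  have hTZ : ∀ x ∈ T, ∃ g : G, g ∉ H ∧ x ∈ Z g := by
    intro x hx
    obtain ⟨c, hc, hxc⟩ := Set.mem_iUnion₂.mp hx
    exact ⟨Quotient.out c, hc, hxc⟩
  refine ⟨B₀ ∪ T, hB₀closed.union hTclosed, ?_, ?_, ?_⟩
  · exact measure_union_null hB₀null hTnull
  · -- H-stability
    intro h hh x hx
    rcases hx with hx | hx
    · exact Or.inl (hB₀stable h (Subgroup.mem_top h) x hx)
    · obtain ⟨g, hg, hxZ⟩ := hTZ x hx
      right
      have hconj : h * g * h⁻¹ ∉ H := by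
        intro hmemH
        have h2 := H.mul_mem (H.mul_mem (H.inv_mem hh) hmemH) hh
        rw [show h⁻¹ * (h * g * h⁻¹) * h = g by group] at h2
        exact hg h2
      apply hZT _ hconj
      refine Set.mem_iInter.mpr fun j => ?_
      have h1 : (h * g * h⁻¹)⁻¹ • h • x = h • g⁻¹ • x := by
        rw [smul_smul, smul_smul]
        congr 1
        group
      show fstar j ((h * g * h⁻¹)⁻¹ • h • x) = fstar j (h • x)
      rw [h1, hinv' j h hh, hinv' j h hh]
      exact Set.mem_iInter.mp hxZ j
  · -- distinguishing
    intro x₁ hx₁ x₂ hx₂ hagree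
    have hx₁B : x₁ ∉ B₀ := fun h => hx₁ (Or.inl h)
    have hx₂B : x₂ ∉ B₀ := fun h => hx₂ (Or.inl h)
    obtain ⟨g, -, hgx⟩ := hB₀dist x₁ hx₁B x₂ hx₂B fun j => hagree (Sum.inl j)
    have hgH : g ∈ H := by
      by_contra hg
      have hginv : g⁻¹ ∉ H := fun h => hg (by simpa using H.inv_mem h)
      have : x₁ ∈ Z g⁻¹ := by
        refine Set.mem_iInter.mpr fun j => ?_
        show fstar j ((g⁻¹)⁻¹ • x₁) = fstar j x₁
        rw [inv_inv, hgx]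
        exact (hagree (Sum.inr j)).symm
      exact hx₁ (Or.inr (hZT _ hginv this))
    exact ⟨g, hgH, hgx⟩
end

section
/- Let X be a topological space equipped with a measure, let a group G act on X, let 𝔽 be an abelian group, and let H ⊆ G be a subgroup of finite index. Let 𝓕 be a class of functions X → 𝔽 that is an abelian group under pointwise addition, is stable under the G-action (g·f)(x) = f(g⁻¹x), and such that every nonzero element of 𝓕 has a vanishing set that is closed and of measure zero. Let f*₁, …, f*_s : X → 𝔽 Galois-distinguish H from G, with stabilizers G_j = {g ∈ G : g·f*_j = f*_j}, and let B = ⋃_{j, g ∈ G∖G_j} {x ∈ X : (g·f*_j − f*_j)(x) = 0}. Then for any x₁, x₂ ∈ X ∖ B lying in the same G-orbit but in distinct H-orbits, there exists j ∈ {1,…,s} with f*_j(x₁) ≠ f*_j(x₂). -/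
open MeasureTheory

/-- Suppose `f*₁, …, f*_s` Galois-distinguish the finite-index subgroup `H` from `G`
(relative to a class `𝓕` of functions forming an abelian group under pointwise addition,
`G`-stable, and whose nonzero members have closed measure-zero vanishing sets), and let
`B = ⋃_{j, g ∉ G_j} {x : (g · f*_j − f*_j)(x) = 0}` be the bad set (where
`G_j = {g : g · f*_j = f*_j}`, so `g ∉ G_j` iff `g · f*_j ≠ f*_j`). Then any
`x₁, x₂ ∉ B` lying in the same `G`-orbit but in distinct `H`-orbits are distinguished
by some `f*_j`. -/
theorem separated_by_galois_distinguishers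
    {G X 𝔽 : Type*} [Group G] [MulAction G X] [TopologicalSpace X]
    [MeasurableSpace X] [AddCommGroup 𝔽] (μ : Measure X)
    (H : Subgroup G) [H.FiniteIndex]
    (𝓕 : AddSubgroup (X → 𝔽))
    (hGstable : ∀ g : G, ∀ f ∈ 𝓕, actOn g f ∈ 𝓕)
    (hvanish : ∀ f ∈ 𝓕, f ≠ (0 : X → 𝔽) →
      IsClosed {x : X | f x = 0} ∧ μ {x : X | f x = 0} = 0)
    {s : ℕ} (fstar : Fin s → X → 𝔽)
    (hgal : GaloisDist (𝓕 : Set (X → 𝔽)) H fstar)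
    (B : Set X)
    (hB : B = ⋃ (j : Fin s), ⋃ (g : G), ⋃ (_ : actOn g (fstar j) ≠ fstar j),
        {x : X | actOn g (fstar j) x - fstar j x = 0})
    (x₁ x₂ : X) (hx₁ : x₁ ∉ B) (hx₂ : x₂ ∉ B)
    (hsameG : ∃ g : G, g • x₁ = x₂)
    (hdiffH : ¬ ∃ h ∈ H, h • x₁ = x₂) :
    ∃ j : Fin s, fstar j x₁ ≠ fstar j x₂ := by
  obtain ⟨g, hg⟩ := hsameG
  have hgH : g ∉ H := fun hmem => hdiffH ⟨g, hmem, hg⟩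
  by_contra hcon
  push_neg at hcon
  -- g does not fix all fstar j, else g ∈ H
  have : ¬ ∀ j, actOn g (fstar j) = fstar j := fun hall => hgH (hgal.2.2 g hall)
  push_neg at this
  obtain ⟨j, hj⟩ := this
  apply hx₂
  rw [hB]
  refine Set.mem_iUnion.2 ⟨j, Set.mem_iUnion.2 ⟨g, Set.mem_iUnion.2 ⟨hj, ?_⟩⟩⟩
  show actOn g (fstar j) x₂ - fstar j x₂ = 0
  have : actOn g (fstar j) x₂ = fstar j x₁ := by
    simp [actOn, ← hg]
  rw [this, hcon j, sub_self]
end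

section
/- Let n ≥ 1 and let (x₁, y₁), (x₂, y₂) ∈ ℂ². If x₁^n = x₂^n, x₁^{n−1}y₁ = x₂^{n−1}y₂, and y₁^n = y₂^n, then there exists ζ ∈ ℂ with ζ^n = 1 such that x₂ = ζ·x₁ and y₂ = ζ·y₁. That is, the three invariant polynomials x^n, x^{n−1}y, y^n separate the orbits of the action of the cyclic group of order n on ℂ² by scalar multiplication by n-th roots of unity. -/
/-- The invariants `x^n`, `x^{n−1}y`, `y^n` separate the orbits of the scalar action of
the cyclic group of order `n` on `ℂ²`: if two points take the same values on all three,
they differ by multiplication by a common `n`-th root of unity. -/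
theorem three_invariants_separate_orbits
    (n : ℕ) (hn : 1 ≤ n) (x₁ y₁ x₂ y₂ : ℂ)
    (h1 : x₁ ^ n = x₂ ^ n)
    (h2 : x₁ ^ (n - 1) * y₁ = x₂ ^ (n - 1) * y₂)
    (h3 : y₁ ^ n = y₂ ^ n) :
    ∃ ζ : ℂ, ζ ^ n = 1 ∧ x₂ = ζ * x₁ ∧ y₂ = ζ * y₁ := by
  by_cases hx : x₁ = 0
  · have hx2 : x₂ = 0 := by
      have : x₂ ^ n = 0 := by rw [← h1, hx, zero_pow (by omega)]
      exact pow_eq_zero_iff (by omega) |>.mp this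
    by_cases hy : y₁ = 0
    · refine ⟨1, one_pow n, ?_, ?_⟩
      · simp [hx, hx2]
      · have : y₂ ^ n = 0 := by rw [← h3, hy, zero_pow (by omega)]
        have := pow_eq_zero_iff (n := n) (by omega) |>.mp this
        simp [hy, this]
    · refine ⟨y₂ / y₁, ?_, ?_, ?_⟩
      · rw [div_pow, ← h3, div_self (pow_ne_zero _ hy)]
      · simp [hx, hx2]
      · field_simp
  · have hx2 : x₂ ≠ 0 := by
      intro h
      apply hx
      have : x₁ ^ n = 0 := by rw [h1, h, zero_pow (by omega)]
      exact pow_eq_zero_iff (by omega) |>.mp this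
    have hn' : n = (n - 1) + 1 := by omega
    refine ⟨x₂ / x₁, ?_, ?_, ?_⟩
    · rw [div_pow, ← h1, div_self (pow_ne_zero _ hx)]
    · field_simp
    · have key : x₁ ^ (n - 1) * (x₁ * y₂) = x₁ ^ (n - 1) * (x₂ * y₁) := by
        have e1 : x₂ ^ (n - 1) * x₂ * y₂ = x₂ * (x₁ ^ (n - 1) * y₁) := by
          linear_combination x₂ * h2.symm
        have e2 : x₂ ^ (n - 1) * x₂ = x₁ ^ (n - 1) * x₁ := by
          rw [← pow_succ, ← pow_succ, ← hn', h1]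
        calc x₁ ^ (n - 1) * (x₁ * y₂) = x₂ ^ (n - 1) * x₂ * y₂ := by rw [e2]; ring
          _ = x₂ * (x₁ ^ (n - 1) * y₁) := e1
          _ = x₁ ^ (n - 1) * (x₂ * y₁) := by ring
      have key2 := mul_left_cancel₀ (pow_ne_zero (n - 1) hx) key
      field_simp
      linear_combination key2
end

section
/- Let n ≥ 1 and let j satisfy 1 ≤ j ≤ n−1 and gcd(j, n) = 1. Let (x₁, y₁), (x₂, y₂) ∈ ℂ². If x₁^n = x₂^n, x₁^{n−j}y₁^j = x₂^{n−j}y₂^j, and y₁^n = y₂^n, then there exists ζ ∈ ℂ with ζ^n = 1 such that x₂ = ζ·x₁ and y₂ = ζ·y₁. That is, the polynomials x^n, x^{n−j}y^j, y^n separate the orbits of the action of the cyclic group of order n on ℂ² by scalar multiplication by n-th roots of unity. -/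
/-! Away from the axes, write `x₂ = ζ x₁` with `ζ = x₂ / x₁` an `n`-th root of unity. The mixed
invariant then forces `(ζ y₁)^j = y₂^j`, and `y^n` gives `(ζ y₁)^n = y₂^n`; since `j` and `n` are
coprime, `ζ y₁ = y₂`. On an axis, one coordinate vanishes at both points and the other is matched
by any `n`-th root of unity relating the two values. -/

section CommGroupWithZero

variable {G₀ : Type*} [CommGroupWithZero G₀]

theorem eq_of_pow_eq_pow_of_coprime {a b : G₀} {j n : ℕ} (hjn : j.Coprime n)
    (hj : a ^ j = b ^ j) (hn : a ^ n = b ^ n) : a = b := by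
  rcases eq_or_ne b 0 with rfl | hb
  · rcases eq_or_ne j 0 with rfl | hj0
    · rw [Nat.coprime_zero_left] at hjn
      simpa [hjn] using hn
    · exact (pow_eq_zero_iff hj0).mp (hj.trans (zero_pow hj0))
  · have hdiv : ∀ m, a ^ m = b ^ m → (a / b) ^ m = 1 := fun m hm => by
      rw [div_pow, hm, div_self (pow_ne_zero _ hb)]
    have h := pow_gcd_eq_one.mpr ⟨hdiv j hj, hdiv n hn⟩
    rwa [hjn, pow_one, div_eq_one_iff_eq hb] at h

theorem exists_pow_eq_one_and_eq_mul_of_pow_eq_pow {a b : G₀} {n : ℕ} (hn : n ≠ 0)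
    (h : a ^ n = b ^ n) : ∃ ζ : G₀, ζ ^ n = 1 ∧ b = ζ * a := by
  rcases eq_or_ne a 0 with rfl | ha
  · refine ⟨1, one_pow n, ?_⟩
    rw [mul_zero, ← pow_eq_zero_iff hn, ← h, zero_pow hn]
  · exact ⟨b / a, by rw [div_pow, ← h, div_self (pow_ne_zero _ ha)], (div_mul_cancel₀ b ha).symm⟩

end CommGroupWithZero

theorem three_invariants_separate_orbits_coprime_general
    (n : ℕ) (hn : 1 ≤ n) (j : ℕ) (hj2 : j ≤ n - 1)
    (hgcd : Nat.gcd j n = 1) (x₁ y₁ x₂ y₂ : ℂ)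
    (h1 : x₁ ^ n = x₂ ^ n)
    (h2 : x₁ ^ (n - j) * y₁ ^ j = x₂ ^ (n - j) * y₂ ^ j)
    (h3 : y₁ ^ n = y₂ ^ n) :
    ∃ ζ : ℂ, ζ ^ n = 1 ∧ x₂ = ζ * x₁ ∧ y₂ = ζ * y₁ := by
  have hn0 : n ≠ 0 := by omega
  rcases eq_or_ne x₁ 0 with rfl | hx₁
  · obtain ⟨ζ, hζ, rfl⟩ := exists_pow_eq_one_and_eq_mul_of_pow_eq_pow hn0 h3
    refine ⟨ζ, hζ, ?_, rfl⟩
    rw [mul_zero, ← pow_eq_zero_iff hn0, ← h1, zero_pow hn0]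
  · obtain ⟨ζ, hζ, rfl⟩ := exists_pow_eq_one_and_eq_mul_of_pow_eq_pow hn0 h1
    have hy₁ : y₁ ^ j = ζ ^ (n - j) * y₂ ^ j :=
      mul_left_cancel₀ (pow_ne_zero (n - j) hx₁) (by rw [h2]; ring)
    have hpow_j : (ζ * y₁) ^ j = y₂ ^ j := by
      rw [mul_pow, hy₁, ← mul_assoc, ← pow_add, Nat.add_sub_cancel' (by omega), hζ, one_mul]
    have hpow_n : (ζ * y₁) ^ n = y₂ ^ n := by rw [mul_pow, hζ, one_mul, h3]
    exact ⟨ζ, hζ, rfl, (eq_of_pow_eq_pow_of_coprime hgcd hpow_j hpow_n).symm⟩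

/-- For `1 ≤ j ≤ n − 1` with `gcd(j, n) = 1`, the invariants `x^n`, `x^{n−j}y^j`, `y^n`
separate the orbits of the scalar action of the cyclic group of order `n` on `ℂ²`:
if two points take the same values on all three, they differ by multiplication by a
common `n`-th root of unity. -/
theorem three_invariants_separate_orbits_coprime
    (n : ℕ) (hn : 1 ≤ n) (j : ℕ) (hj1 : 1 ≤ j) (hj2 : j ≤ n - 1)
    (hgcd : Nat.gcd j n = 1) (x₁ y₁ x₂ y₂ : ℂ)
    (h1 : x₁ ^ n = x₂ ^ n)
    (h2 : x₁ ^ (n - j) * y₁ ^ j = x₂ ^ (n - j) * y₂ ^ j)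
    (h3 : y₁ ^ n = y₂ ^ n) :
    ∃ ζ : ℂ, ζ ^ n = 1 ∧ x₂ = ζ * x₁ ∧ y₂ = ζ * y₁ :=
  three_invariants_separate_orbits_coprime_general n hn j hj2 hgcd x₁ y₁ x₂ y₂ h1 h2 h3
end
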